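/- arXiv:1608.05548 — 2 statements merged into one kernel-verified Lean document; each statement's English description precedes it below -/
import Mathlib

section
/- Proposition 1 (soundness of the fixed-point over-approximation Ω_s): Let (Σ,S,T) be an automata network and s a global state. For every objective a_i↝a_j, if there exists a trace π from s and indices m, n ∈ [1;|π|] with m ≤ n, a_i ∈ •π^m, and a_j ∈ (π^n)•, then a_i↝a_j ∈ Ω_s, where Ω_s is the least fixed point of the function F. In other words, membership in Ω_s is a necessary condition for an objective to be concretized by some trace from s. -/
/-!
Automata networks (ANs), steps, traces, minimal traces, local causality analysis
and the goal-oriented reduction, following Paulevé, "Goal-Oriented Reduction of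
Automata Networks".
-/

universe u v

/-- An automata network: a finite set of automata identifiers, each with a
finite set of local states.  (The transition relation is given separately,
as a `TransMap`.) -/
structure AN : Type (max (u + 1) (v + 1)) where
  /-- automata identifiers -/
  Auto : Type u
  /-- local states of each automaton -/
  LS : Auto → Type v
  [decAuto : DecidableEq Auto]
  [fintypeAuto : Fintype Auto]
  [decLS : ∀ a, DecidableEq (LS a)]
  [fintypeLS : ∀ a, Fintype (LS a)]

attribute [instance] AN.decAuto AN.fintypeAuto AN.decLS AN.fintypeLS

namespace AN

variable (N : AN)

/-- The type of all local states, each recording its automaton. -/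
abbrev LSt := Σ a : N.Auto, N.LS a

/-- Global states: one local state per automaton. -/
abbrev GState := ∀ a : N.Auto, N.LS a

/-- A local transition of automaton `a`: an origin and a destination local
state of `a` (distinct), together with an enabling condition giving at most
one local state per automaton, and none for `a` itself. -/
structure Trans (a : N.Auto) where
  orig : N.LS a
  dest : N.LS a
  orig_ne_dest : orig ≠ dest
  enab : ∀ b : N.Auto, Option (N.LS b)
  enab_self : enab a = none

/-- The transition relation `T`: a set of local transitions per automaton. -/
abbrev TransMap := ∀ a : N.Auto, Set (N.Trans a)

variable {N}

/-- Pre-condition `•t` of a local transition. -/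
def Trans.preSet {a : N.Auto} (t : N.Trans a) : Set N.LSt :=
  insert ⟨a, t.orig⟩ {p | t.enab p.1 = some p.2}

/-- Post-condition `t•` of a local transition. -/
def Trans.postSet {a : N.Auto} (t : N.Trans a) : Set N.LSt :=
  insert ⟨a, t.dest⟩ {p | t.enab p.1 = some p.2}

variable (N)

/-- A step: a set of local transitions with at most one transition per
automaton. -/
abbrev Step := ∀ a : N.Auto, Option (N.Trans a)

variable {N}

/-- Pre-condition `•τ` of a step. -/
def Step.pre (τ : Step N) : Set N.LSt :=
  ⋃ (b : N.Auto), ⋃ (t : N.Trans b), ⋃ (_ : τ b = some t), t.preSet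

/-- Post-condition `τ•` of a step. -/
def Step.post (τ : Step N) : Set N.LSt :=
  (⋃ (b : N.Auto), ⋃ (t : N.Trans b), ⋃ (_ : τ b = some t), t.postSet) \
    {p | ∃ t : N.Trans p.1, τ p.1 = some t ∧ p.2 = t.orig}

/-- `σ` is a sub-step of `τ` (inclusion of sets of transitions). -/
def Step.Sub (σ τ : Step N) : Prop :=
  ∀ ⦃a : N.Auto⦄ ⦃t : N.Trans a⦄, σ a = some t → τ a = some t

/-- The step only uses transitions of `T`. -/
def Step.Wf (T : TransMap N) (τ : Step N) : Prop :=
  ∀ ⦃a : N.Auto⦄ ⦃t : N.Trans a⦄, τ a = some t → t ∈ T a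

/-- A step `τ` is playable in `s` iff `•τ ⊆ s`. -/
def Playable (s : GState N) (τ : Step N) : Prop :=
  ∀ p ∈ τ.pre, s p.1 = p.2

/-- `s·τ`: the global state after applying step `τ` in `s`. -/
def applyStep (s : GState N) (τ : Step N) : GState N :=
  fun a => (τ a).elim (s a) Trans.dest

/-- The global state after applying a sequence of steps. -/
def applyTrace (s : GState N) (π : List (Step N)) : GState N :=
  π.foldl applyStep s

/-- `π` is a trace from `s` (of the network with transitions `T`): a finite
sequence of successively playable steps. -/
def IsTrace (T : TransMap N) (s : GState N) (π : List (Step N)) : Prop :=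
  ∀ i (h : i < π.length),
    (π.get ⟨i, h⟩).Wf T ∧ Playable (applyTrace s (π.take i)) (π.get ⟨i, h⟩)

/-- Post-condition `post(π)` of a trace: `⟨a, x⟩ ∈ post(π)` iff `⟨a, x⟩` is in
the post-condition of some step and no later step has a local state of
automaton `a` in its post-condition. -/
def tracePost (π : List (Step N)) : Set N.LSt :=
  {p | ∃ n, ∃ hn : n < π.length, p ∈ (π.get ⟨n, hn⟩).post ∧
    ∀ m (hm : m < π.length), n < m →
      ∀ x : N.LS p.1, (⟨p.1, x⟩ : N.LSt) ∉ (π.get ⟨m, hm⟩).post}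

/-- Local states of automaton `a` in the post-condition of a trace. -/
def postProj (π : List (Step N)) (a : N.Auto) : Set (N.LS a) :=
  {x | (⟨a, x⟩ : N.LSt) ∈ tracePost π}

/-- `tr(π)`: the set of transitions composing a trace. -/
def traceTrans (π : List (Step N)) : Set (Σ a : N.Auto, N.Trans a) :=
  {q | ∃ τ ∈ π, τ q.1 = some q.2}

/-- `ϖ` is a sub-trace of `π`: there is a strictly order-preserving injection
`φ` of the steps of `ϖ` into those of `π` with `ϖ^i ⊆ π^{φ(i)}`. -/
def SubTrace (ϖ π : List (Step N)) : Prop :=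
  ∃ φ : Fin ϖ.length → Fin π.length, StrictMono φ ∧
    ∀ i : Fin ϖ.length, (ϖ.get i).Sub (π.get (φ i))

/-- `π` is a minimal trace from `s` w.r.t. the reachability of the local state
`p`. -/
def MinimalTrace (T : TransMap N) (s : GState N) (p : N.LSt)
    (π : List (Step N)) : Prop :=
  IsTrace T s π ∧ p ∈ tracePost π ∧
    ¬ ∃ ϖ : List (Step N), IsTrace T s ϖ ∧ ϖ ≠ π ∧ ϖ.length ≤ π.length ∧
      p ∈ tracePost ϖ ∧ SubTrace ϖ π

/-- The local state `p` is reachable from `s`. -/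
def Reachable (T : TransMap N) (s : GState N) (p : N.LSt) : Prop :=
  s p.1 = p.2 ∨ ∃ π : List (Step N), IsTrace T s π ∧ p ∈ tracePost π

/-- `η ∈ local-paths(a_i ↝ a_j)`: local acyclic paths of automaton `a` from
`i` to `j`, using transitions of `T`. -/
def IsLocalPath (T : TransMap N) {a : N.Auto} (i j : N.LS a)
    (η : List (N.Trans a)) : Prop :=
  (∀ t ∈ η, t ∈ T a) ∧
    ((i = j ∧ η = []) ∨
     (i ≠ j ∧ ∃ hne : η ≠ [],
       (η.head hne).orig = i ∧ (η.getLast hne).dest = j ∧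
       (∀ n : ℕ, ∀ h : n + 1 < η.length,
         (η.get ⟨n, Nat.lt_of_succ_lt h⟩).dest = (η.get ⟨n + 1, h⟩).orig) ∧
       (∀ n m : Fin η.length, m < n → (η.get n).dest ≠ (η.get m).orig)))

variable (N)

/-- Objectives `a_i ↝ a_j`: pairs of local states of a same automaton. -/
abbrev Obj := Σ a : N.Auto, N.LS a × N.LS a

variable {N}

/-- The operator `F` on sets of objectives: `a_i ↝ a_j ∈ F(Ω)` iff some local
acyclic path from `i` to `j` has all the objectives from the initial state `s`
to its enabling conditions already in `Ω`. -/
def Fop (T : TransMap N) (s : GState N) (Ω : Set (Obj N)) : Set (Obj N) :=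
  {P | ∃ η : List (N.Trans P.1), IsLocalPath T P.2.1 P.2.2 η ∧
    ∀ t ∈ η, ∀ (b : N.Auto) (k : N.LS b), t.enab b = some k →
      (⟨b, (s b, k)⟩ : Obj N) ∈ Ω}

/-- `rcsol_s(P)` (with validity given by the set `Ω` of valid objectives):
local acyclic paths for `P` whose enabling conditions only involve valid
objectives from the initial state `s`. -/
def rcsol (T : TransMap N) (s : GState N) (Ω : Set (Obj N)) (P : Obj N) :
    Set (List (N.Trans P.1)) :=
  {η | IsLocalPath T P.2.1 P.2.2 η ∧
    ∀ t ∈ η, ∀ (b : N.Auto) (k : N.LS b), t.enab b = some k →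
      (⟨b, (s b, k)⟩ : Obj N) ∈ Ω}

/-- `tr(rcsol_s(P))`: the transitions of the filtered local paths of `P`. -/
def rcsolTr (T : TransMap N) (s : GState N) (Ω : Set (Obj N)) (P : Obj N) :
    Set (N.Trans P.1) :=
  {t | ∃ η ∈ rcsol T s Ω P, t ∈ η}

/-- `tr(B)`: the transitions of the filtered local paths of the objectives
in `B`. -/
def trB (T : TransMap N) (s : GState N) (Ω : Set (Obj N)) (B : Set (Obj N)) :
    Set (Σ a : N.Auto, N.Trans a) :=
  {q | ∃ i j : N.LS q.1, (⟨q.1, (i, j)⟩ : Obj N) ∈ B ∧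
    q.2 ∈ rcsolTr T s Ω (⟨q.1, (i, j)⟩ : Obj N)}

/-- The closure conditions defining the set `B` of collected objectives for
the goal `g_⊤` from the initial state `s` (so that `a_0 = s a` for each
automaton `a`):
(1) `g_0 ↝ g_⊤ ∈ B`;
(2) if `b_j →^ℓ b_k ∈ tr(B)` then `a_0 ↝ a_i ∈ B` for every `a_i ∈ ℓ`;
(3) if `b_j →^ℓ b_k ∈ tr(B)` and `b_⋆ ↝ b_i ∈ B` then `b_k ↝ b_i ∈ B`. -/
def BClosed (T : TransMap N) (s : GState N) (Ω : Set (Obj N))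
    (g : N.Auto) (gtop : N.LS g) (B : Set (Obj N)) : Prop :=
  (⟨g, (s g, gtop)⟩ : Obj N) ∈ B ∧
  (∀ (b : N.Auto) (t : N.Trans b),
      (⟨b, t⟩ : Σ a : N.Auto, N.Trans a) ∈ trB T s Ω B →
    ∀ (a : N.Auto) (i : N.LS a), t.enab a = some i →
      (⟨a, (s a, i)⟩ : Obj N) ∈ B) ∧
  (∀ (b : N.Auto) (t : N.Trans b),
      (⟨b, t⟩ : Σ a : N.Auto, N.Trans a) ∈ trB T s Ω B →
    ∀ bs bi : N.LS b, (⟨b, (bs, bi)⟩ : Obj N) ∈ B →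
      (⟨b, (t.dest, bi)⟩ : Obj N) ∈ B)

end AN

/-!
Follow automaton `a` along the trace: between the states reached after `m` and after `n` steps,
its successive local states form a walk of local transitions, and erasing loops leaves a local
acyclic path between them. Every transition of that path was played at some step `k < n`, where
each of its enabling conditions `b_c` held; so `s(b) ↝ b_c` is an objective realised by the
shorter prefix of length `k`, and by strong induction on `n` it lies in `Ω`. Hence the objective
lies in `F(Ω) ⊆ Ω`.
-/

namespace AN

variable {N : AN}

def IsWalk {a : N.Auto} : N.LS a → List (N.Trans a) → N.LS a → Prop
  | i, [], j => i = j
  | i, t :: η, j => t.orig = i ∧ IsWalk t.dest η j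

namespace IsWalk

variable {a : N.Auto} {i j : N.LS a} {η : List (N.Trans a)}

theorem concat {x : N.LS a} {t : N.Trans a} (h : IsWalk i η x) (ht : t.orig = x) :
    IsWalk i (η ++ [t]) t.dest := by
  induction η generalizing i with
  | nil => exact ⟨ht.trans h.symm, rfl⟩
  | cons u η ih => exact ⟨h.1, ih h.2⟩

theorem exists_suffix_of_mem (h : IsWalk i η j) (hnd : (i :: η.map Trans.dest).Nodup)
    {x : N.LS a} (hx : x ∈ i :: η.map Trans.dest) :
    ∃ η', η' <:+ η ∧ IsWalk x η' j ∧ (x :: η'.map Trans.dest).Nodup := by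
  induction η generalizing i with
  | nil =>
    obtain rfl : x = i := by simpa using hx
    exact ⟨[], List.suffix_refl _, h, hnd⟩
  | cons t η ih =>
    rcases List.mem_cons.1 hx with rfl | hx
    · exact ⟨t :: η, List.suffix_refl _, h, hnd⟩
    · obtain ⟨η', hsuf, hw, hnd'⟩ := ih h.2 (List.nodup_cons.1 hnd).2 hx
      exact ⟨η', hsuf.trans (List.suffix_cons _ _), hw, hnd'⟩

theorem exists_nodup_sublist (h : IsWalk i η j) :
    ∃ η', η'.Sublist η ∧ IsWalk i η' j ∧ (i :: η'.map Trans.dest).Nodup := by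
  induction η generalizing i with
  | nil => exact ⟨[], List.Sublist.slnil, h, List.nodup_singleton i⟩
  | cons t η ih =>
    obtain ⟨η₁, hsub, hw, hnd⟩ := ih h.2
    by_cases hi : i ∈ t.dest :: η₁.map Trans.dest
    · obtain ⟨η', hsuf, hw', hnd'⟩ := hw.exists_suffix_of_mem hnd hi
      exact ⟨η', (hsuf.sublist.trans hsub).cons t, hw', hnd'⟩
    · exact ⟨t :: η₁, hsub.cons_cons t, ⟨h.1, hw⟩, List.nodup_cons.2 ⟨hi, hnd⟩⟩

theorem orig_getElem (h : IsWalk i η j) (k : ℕ) (hk : k < η.length) :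
    η[k].orig = (i :: η.map Trans.dest)[k]'(by simp; omega) := by
  induction η generalizing i k with
  | nil => simp at hk
  | cons t η ih =>
    cases k with
    | zero => exact h.1
    | succ k => simpa using ih h.2 k (by simpa using hk)

theorem dest_getLast (h : IsWalk i η j) (hne : η ≠ []) : (η.getLast hne).dest = j := by
  induction η generalizing i with
  | nil => exact absurd rfl hne
  | cons t η ih =>
    cases η with
    | nil => exact h.2
    | cons u η => exact ih h.2 (List.cons_ne_nil _ _)

theorem isLocalPath {T : TransMap N} (h : IsWalk i η j) (hT : ∀ t ∈ η, t ∈ T a)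
    (hnd : (i :: η.map Trans.dest).Nodup) : IsLocalPath T i j η := by
  refine ⟨hT, ?_⟩
  by_cases hne : η = []
  · subst hne
    exact Or.inl ⟨h, rfl⟩
  have hlast := h.dest_getLast hne
  have hij : i ≠ j := by
    rintro rfl
    exact (List.nodup_cons.1 hnd).1 (hlast ▸ List.mem_map_of_mem (List.getLast_mem hne))
  have hdest (k : ℕ) (hk : k < η.length) :
      η[k].dest = (i :: η.map Trans.dest)[k + 1]'(by simpa using hk) := by
    simp only [List.getElem_cons_succ, List.getElem_map]
  refine Or.inr ⟨hij, hne, ?_, hlast, fun k hk => ?_, fun k l hlt heq => ?_⟩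
  · simpa [List.head_eq_getElem] using h.orig_getElem 0 (List.length_pos_iff.2 hne)
  · exact (hdest k _).trans (h.orig_getElem (k + 1) hk).symm
  · have := (List.Nodup.getElem_inj_iff hnd).1
      ((hdest k k.isLt).symm.trans (heq.trans (h.orig_getElem l l.isLt)))
    have := Fin.lt_def.1 hlt
    omega

end IsWalk

variable {T : TransMap N} {s : GState N} {π : List (Step N)}

theorem applyTrace_take_succ {k : ℕ} (hk : k < π.length) :
    applyTrace s (π.take (k + 1)) = applyStep (applyTrace s (π.take k)) (π.get ⟨k, hk⟩) := by
  rw [applyTrace, List.take_add_one, List.foldl_append, List.getElem?_eq_getElem hk]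
  rfl

namespace Playable

variable {τ : Step N} {b : N.Auto} {t : N.Trans b}

theorem eq_orig (hp : Playable s τ) (h : τ b = some t) : s b = t.orig :=
  hp ⟨b, t.orig⟩ (Set.mem_iUnion₂.2 ⟨b, t, Set.mem_iUnion.2 ⟨h, Set.mem_insert _ _⟩⟩)

theorem eq_of_enab (hp : Playable s τ) (h : τ b = some t) {c : N.Auto} {x : N.LS c}
    (he : t.enab c = some x) : s c = x :=
  hp ⟨c, x⟩ (Set.mem_iUnion₂.2 ⟨b, t, Set.mem_iUnion.2 ⟨h, Set.mem_insert_of_mem _ he⟩⟩)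

theorem applyStep_eq_of_mem_post (hp : Playable s τ) {a : N.Auto} {x : N.LS a}
    (hx : (⟨a, x⟩ : N.LSt) ∈ τ.post) : applyStep s τ a = x := by
  obtain ⟨hx, hnot⟩ := hx
  obtain ⟨b, t, hτ, hx⟩ : ∃ b t, τ b = some t ∧ (⟨a, x⟩ : N.LSt) ∈ t.postSet := by
    simpa only [Set.mem_iUnion, exists_prop] using hx
  rcases Set.mem_insert_iff.1 hx with heq | henab
  · obtain ⟨rfl, hx⟩ := Sigma.mk.inj_iff.1 heq
    simp [applyStep, hτ, eq_of_heq hx]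
  · have hsx : s a = x := hp.eq_of_enab hτ henab
    rcases hτa : τ a with _ | t'
    · simp [applyStep, hτa, hsx]
    · exact absurd ⟨t', hτa, by rw [← hp.eq_orig hτa, hsx]⟩ hnot

end Playable

def EnabledBefore (s : GState N) (π : List (Step N)) (n : ℕ) {a : N.Auto} (t : N.Trans a) :
    Prop :=
  ∀ (b : N.Auto) (c : N.LS b), t.enab b = some c → ∃ k < n, applyTrace s (π.take k) b = c

theorem EnabledBefore.mono {n n' : ℕ} {a : N.Auto} {t : N.Trans a}
    (h : EnabledBefore s π n t) (hn : n ≤ n') : EnabledBefore s π n' t := fun b c hc =>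
  let ⟨k, hk, hkc⟩ := h b c hc
  ⟨k, hk.trans_le hn, hkc⟩

theorem IsTrace.exists_walk (hπ : IsTrace T s π) (a : N.Auto) {m n : ℕ} (hmn : m ≤ n)
    (hn : n ≤ π.length) :
    ∃ η : List (N.Trans a),
      IsWalk (applyTrace s (π.take m) a) η (applyTrace s (π.take n) a) ∧
      ∀ t ∈ η, t ∈ T a ∧ EnabledBefore s π n t := by
  induction n, hmn using Nat.le_induction with
  | base => exact ⟨[], rfl, by simp⟩
  | succ n hmn ih =>
    have hk : n < π.length := hn
    obtain ⟨η, hw, hη⟩ := ih hk.le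
    obtain ⟨hwf, hpl⟩ := hπ n hk
    have hold : ∀ t ∈ η, t ∈ T a ∧ EnabledBefore s π (n + 1) t := fun t ht =>
      ⟨(hη t ht).1, (hη t ht).2.mono n.le_succ⟩
    rw [applyTrace_take_succ hk]
    rcases hτ : π.get ⟨n, hk⟩ a with _ | t
    · exact ⟨η, by simpa [applyStep, hτ] using hw, hold⟩
    · refine ⟨η ++ [t], by simpa [applyStep, hτ] using hw.concat (hpl.eq_orig hτ).symm, ?_⟩
      simp only [List.mem_append, List.mem_singleton]
      rintro u (hu | rfl)
      · exact hold u hu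
      · exact ⟨hwf hτ, fun b c hc => ⟨n, n.lt_succ_self, hpl.eq_of_enab hτ hc⟩⟩

theorem IsTrace.objective_mem_of_le {Ω : Set (Obj N)} (hΩ : Fop T s Ω ⊆ Ω)
    (hπ : IsTrace T s π) (a : N.Auto) {m n : ℕ} (hmn : m ≤ n) (hn : n ≤ π.length) :
    (⟨a, (applyTrace s (π.take m) a, applyTrace s (π.take n) a)⟩ : Obj N) ∈ Ω := by
  induction n using Nat.strong_induction_on generalizing m a with
  | _ n ih =>
  obtain ⟨η, hw, hη⟩ := hπ.exists_walk a hmn hn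
  obtain ⟨η', hsub, hw', hnd⟩ := hw.exists_nodup_sublist
  refine hΩ ⟨η', hw'.isLocalPath (fun t ht => (hη t (hsub.subset ht)).1) hnd,
    fun t ht b c hc => ?_⟩
  obtain ⟨k, hk, rfl⟩ := (hη t (hsub.subset ht)).2 b c hc
  simpa [applyTrace] using ih k hk b k.zero_le (hk.le.trans hn)

end AN

open AN

-- Steps are indexed from `0`, whereas the paper writes `π^1, …, π^|π|`.
/-- **Proposition 1** (soundness of the fixed-point over-approximation `Ω_s`):
if some trace from `s` concretizes the objective `a_i ↝ a_j` (i.e. has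
`a_i ∈ •π^m` and `a_j ∈ (π^n)•` with `m ≤ n`), then `a_i ↝ a_j` belongs to the
least fixed point `Ω` of `F` (indices are 0-based). -/
theorem objective_mem_lfp_of_trace
    (N : AN) (T : TransMap N) (s : GState N)
    (Ω : Set (Obj N)) (hΩ : IsLeast {W : Set (Obj N) | Fop T s W = W} Ω)
    (a : N.Auto) (i j : N.LS a)
    (π : List (Step N)) (hπ : IsTrace T s π)
    (m n : ℕ) (hmn : m ≤ n) (hn : n < π.length)
    (hi : (⟨a, i⟩ : N.LSt) ∈ (π.get ⟨m, lt_of_le_of_lt hmn hn⟩).pre)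
    (hj : (⟨a, j⟩ : N.LSt) ∈ (π.get ⟨n, hn⟩).post) :
    (⟨a, (i, j)⟩ : Obj N) ∈ Ω := by
  have hi' : applyTrace s (π.take m) a = i := (hπ m (hmn.trans_lt hn)).2 ⟨a, i⟩ hi
  have hj' : applyTrace s (π.take (n + 1)) a = j := by
    rw [applyTrace_take_succ hn]
    exact (hπ n hn).2.applyStep_eq_of_mem_post hj
  have hfix : Fop T s Ω = Ω := hΩ.1
  simpa [hi', hj'] using hπ.objective_mem_of_le hfix.le a (hmn.trans n.le_succ) hn
end

section
/- Lemma 2 (the last step of a minimal trace is in tr(B)): Let (Σ,S,T) be an automata network, s a global state with s(a) = a_0 for every a ∈ Σ, and g_⊤ ∈ S(g) a goal local state with g_0 ≠ g_⊤. If π is a trace from s that is minimal w.r.t. g_⊤ reachability, then π^{|π|} ⊆ tr(B). -/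
/-!
Automata networks (ANs), steps, traces, minimal traces, local causality analysis
and the goal-oriented reduction, following Paulevé, "Goal-Oriented Reduction of
Automata Networks".
-/

universe u v

open AN

/-!
If `g` reached `g_⊤` before the last step of a minimal trace `π`, the prefix of `π` ending
there would be a shorter sub-trace reaching `g_⊤`; and any transition of the last step other
than the one of `g` could be dropped. So the last step is a single transition `t` of `g` into
`g_⊤`, and no earlier transition of `g` ends in `g_⊤`. Erasing the loops of the local walk of
`g` along `π` gives an acyclic local path from `g_0` to `g_⊤`, whose last transition must
therefore be `t`. Its enabling conditions are local states reached along `π`, which are valid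
(Lemma 1 of the paper: loop erasure turns the walk of any automaton along a trace into a local
path, so by induction on the trace every reached local state satisfies the fixed point
equation of `Ω`). Hence the path is in `rcsol_s(g_0 ↝ g_⊤)`, and `g_0 ↝ g_⊤ ∈ B`.
-/

namespace AN

variable {N : AN} {T : TransMap N} {s : GState N}

section Steps

variable {τ σ : Step N} {a : N.Auto} {t : N.Trans a}

lemma Step.mem_pre_of_eq_some (h : τ a = some t) {p : N.LSt} (hp : p ∈ t.preSet) :
    p ∈ τ.pre :=
  Set.mem_iUnion₂.2 ⟨a, t, Set.mem_iUnion.2 ⟨h, hp⟩⟩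

lemma Step.mem_post_of_eq_some (h : τ a = some t) : ⟨a, t.dest⟩ ∈ τ.post := by
  refine ⟨Set.mem_iUnion₂.2 ⟨a, t, Set.mem_iUnion.2 ⟨h, Set.mem_insert _ _⟩⟩, ?_⟩
  rintro ⟨t', ht', hdest⟩
  cases h.symm.trans ht'
  exact t.orig_ne_dest hdest.symm

lemma Step.dest_eq_or_mem_pre_of_mem_post {p : N.LSt} (hp : p ∈ τ.post) :
    (∃ t, τ p.1 = some t ∧ t.dest = p.2) ∨ p ∈ τ.pre := by
  obtain ⟨b, t, hpt⟩ := Set.mem_iUnion₂.1 hp.1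
  obtain ⟨hbt, hpt⟩ := Set.mem_iUnion.1 hpt
  rcases hpt with rfl | hk
  · exact .inl ⟨t, hbt, rfl⟩
  · exact .inr (Step.mem_pre_of_eq_some hbt (Set.mem_insert_of_mem _ hk))

lemma Step.Sub.rfl : τ.Sub τ := fun _ _ => id

lemma Step.Sub.pre_subset (h : σ.Sub τ) : σ.pre ⊆ τ.pre := by
  simp only [Step.pre, Set.iUnion_subset_iff]
  exact fun b t hb p hp => Step.mem_pre_of_eq_some (h hb) hp

lemma Playable.orig_eq (hpl : Playable s τ) (h : τ a = some t) : s a = t.orig :=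
  hpl _ (Step.mem_pre_of_eq_some h (Set.mem_insert _ _))

lemma Playable.enab_eq (hpl : Playable s τ) (h : τ a = some t) {c : N.Auto} {k : N.LS c}
    (hk : t.enab c = some k) : s c = k :=
  hpl ⟨c, k⟩ (Step.mem_pre_of_eq_some h (Set.mem_insert_of_mem _ hk))

lemma Playable.of_sub (hpl : Playable s τ) (h : σ.Sub τ) : Playable s σ :=
  fun p hp => hpl p (h.pre_subset hp)

lemma applyStep_of_eq_some (h : τ a = some t) : applyStep s τ a = t.dest := by
  simp [applyStep, h]

lemma applyStep_of_eq_none (h : τ a = none) : applyStep s τ a = s a := by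
  simp [applyStep, h]

end Steps

section Traces

variable {π ρ ρ' ϖ : List (Step N)} {τ σ : Step N}

lemma applyTrace_concat : applyTrace s (ρ ++ [τ]) = applyStep (applyTrace s ρ) τ := by
  simp [applyTrace]

lemma IsTrace.of_append (h : IsTrace T s (ρ ++ ρ')) : IsTrace T s ρ := by
  intro i hi
  simpa [List.getElem_append_left hi, List.take_append_of_le_length hi.le] using
    h i (by rw [List.length_append]; omega)

lemma isTrace_concat :
    IsTrace T s (ρ ++ [τ]) ↔ IsTrace T s ρ ∧ τ.Wf T ∧ Playable (applyTrace s ρ) τ := by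
  refine ⟨fun h => ⟨h.of_append, by simpa using h ρ.length (by simp)⟩, ?_⟩
  rintro ⟨hρ, hτ⟩ i hi
  rw [List.length_append, List.length_singleton] at hi
  rcases Nat.lt_or_ge i ρ.length with hi' | hi'
  · simpa [List.getElem_append_left hi', List.take_append_of_le_length hi'.le] using hρ i hi'
  · obtain rfl : i = ρ.length := by omega
    simpa using hτ

lemma IsTrace.of_append_cons (h : IsTrace T s (ρ ++ τ :: ρ')) : IsTrace T s (ρ ++ [τ]) :=
  IsTrace.of_append (ρ' := ρ') (by simpa using h)

lemma exists_eq_append_cons_of_mem_tracePost {p : N.LSt}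
    (hp : p ∈ tracePost π) : ∃ ρ τ ρ', π = ρ ++ τ :: ρ' ∧ p ∈ τ.post := by
  obtain ⟨n, hn, hpost, -⟩ := hp
  refine ⟨π.take n, π[n], π.drop (n + 1), ?_, by simpa using hpost⟩
  rw [← List.drop_eq_getElem_cons hn, List.take_append_drop]

lemma IsTrace.wf_of_mem (h : IsTrace T s π) (hτ : τ ∈ π) : τ.Wf T := by
  obtain ⟨i, hi, rfl⟩ := List.mem_iff_getElem.1 hτ
  exact (h i hi).1

lemma mem_tracePost_concat {p : N.LSt} (hp : p ∈ τ.post) : p ∈ tracePost (ρ ++ [τ]) :=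
  ⟨ρ.length, by simp, by simpa using hp, fun m hm hlt => by
    simp only [List.length_append, List.length_singleton] at hm; omega⟩

lemma subTrace_of_prefix (h : ϖ <+: π) : SubTrace ϖ π :=
  ⟨fun i => ⟨i, i.2.trans_le h.length_le⟩, fun _ _ hij => hij,
    fun i => by simpa [h.getElem i.2] using Step.Sub.rfl⟩

lemma subTrace_concat (h : σ.Sub τ) : SubTrace (ρ ++ [σ]) (ρ ++ [τ]) := by
  refine ⟨Fin.cast (by simp), fun _ _ hij => hij, fun ⟨i, hi⟩ => ?_⟩
  rw [List.length_append, List.length_singleton] at hi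
  rcases Nat.lt_or_ge i ρ.length with hi' | hi'
  · simpa [List.getElem_append_left hi'] using Step.Sub.rfl
  · obtain rfl : i = ρ.length := by omega
    simpa using h

lemma MinimalTrace.eq_of_subTrace {p : N.LSt} (h : MinimalTrace T s p π)
    (hϖ : IsTrace T s ϖ) (hlen : ϖ.length ≤ π.length) (hp : p ∈ tracePost ϖ)
    (hsub : SubTrace ϖ π) : ϖ = π :=
  by_contra fun hne => h.2.2 ⟨ϖ, hϖ, hne, hlen, hp, hsub⟩

end Traces

section Walks

variable {a : N.Auto}

def IsLocalWalk : N.LS a → N.LS a → List (N.Trans a) → Prop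
  | i, j, [] => i = j
  | i, j, t :: w => t.orig = i ∧ IsLocalWalk t.dest j w

variable {i j : N.LS a} {u : N.Trans a}

lemma IsLocalWalk.concat : ∀ {w : List (N.Trans a)} {i : N.LS a},
    IsLocalWalk i j w → u.orig = j → IsLocalWalk i u.dest (w ++ [u])
  | [], _, rfl, hu => ⟨hu, rfl⟩
  | _ :: _, _, ⟨ho, hw⟩, hu => ⟨ho, hw.concat hu⟩

lemma IsLocalWalk.drop : ∀ {w : List (N.Trans a)} {i : N.LS a}, IsLocalWalk i j w →
    ∀ k (hk : k < w.length), IsLocalWalk w[k].dest j (w.drop (k + 1))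
  | _ :: _, _, ⟨_, hw⟩, 0, _ => hw
  | _ :: _, _, ⟨_, hw⟩, k + 1, hk => hw.drop k (by simpa using hk)

lemma IsLocalWalk.getElem_orig : ∀ {w : List (N.Trans a)} {i : N.LS a}, IsLocalWalk i j w →
    ∀ k (hk : k < w.length),
      w[k].orig = (i :: w.map Trans.dest)[k]'(by simpa using Nat.lt_succ_of_lt hk)
  | _ :: _, _, ⟨ho, _⟩, 0, _ => ho
  | _ :: _, _, ⟨_, hw⟩, k + 1, hk => by simpa using hw.getElem_orig k (by simpa using hk)

lemma IsLocalWalk.getLast_dest : ∀ {w : List (N.Trans a)} {i : N.LS a}, IsLocalWalk i j w →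
    ∀ hne : w ≠ [], (w.getLast hne).dest = j
  | [_], _, ⟨_, hw⟩, _ => hw
  | _ :: _ :: _, _, ⟨_, hw⟩, _ => hw.getLast_dest (List.cons_ne_nil _ _)

lemma IsLocalWalk.exists_dest_eq : ∀ {w : List (N.Trans a)} {i : N.LS a},
    IsLocalWalk i j w → i ≠ j → ∃ u ∈ w, u.dest = j
  | [], _, rfl, hij => absurd rfl hij
  | t :: w, _, ⟨_, hw⟩, _ => by
    by_cases htj : t.dest = j
    · exact ⟨t, List.mem_cons_self, htj⟩
    · obtain ⟨u, hu, hdest⟩ := hw.exists_dest_eq htj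
      exact ⟨u, List.mem_cons_of_mem _ hu, hdest⟩

-- Erasing the loop through the initial state.
lemma IsLocalWalk.exists_nodup_of_nodup_dest {w : List (N.Trans a)} (hw : IsLocalWalk i j w)
    (hnd : (w.map Trans.dest).Nodup) :
    ∃ η, IsLocalWalk i j η ∧ (i :: η.map Trans.dest).Nodup ∧ η ⊆ w := by
  by_cases hi : i ∈ w.map Trans.dest
  · obtain ⟨k, hk, hkd⟩ := List.mem_iff_getElem.1 hi
    rw [List.length_map] at hk
    rw [List.getElem_map] at hkd
    refine ⟨w.drop (k + 1), hkd ▸ hw.drop k hk, ?_, List.drop_subset _ _⟩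
    have hdrop : i :: (w.drop (k + 1)).map Trans.dest = (w.map Trans.dest).drop k := by
      rw [List.drop_eq_getElem_cons (l := w.map Trans.dest) (by simpa using hk)]
      simp [hkd, List.map_drop]
    rw [hdrop]
    exact hnd.sublist (List.drop_sublist _ _)
  · exact ⟨w, hw, List.nodup_cons.2 ⟨hi, hnd⟩, List.Subset.refl w⟩

lemma IsLocalWalk.exists_nodup : ∀ {w : List (N.Trans a)} {i : N.LS a}, IsLocalWalk i j w →
    ∃ η, IsLocalWalk i j η ∧ (i :: η.map Trans.dest).Nodup ∧ η ⊆ w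
  | [], _, hw => ⟨[], hw, List.nodup_singleton _, List.Subset.refl []⟩
  | t :: _, _, ⟨ho, hw⟩ => by
    obtain ⟨η, hη, hnd, hsub⟩ := hw.exists_nodup
    obtain ⟨η', hη', hnd', hsub'⟩ :=
      IsLocalWalk.exists_nodup_of_nodup_dest (w := t :: η) ⟨ho, hη⟩ hnd
    exact ⟨η', hη', hnd', List.Subset.trans hsub' (List.cons_subset_cons _ hsub)⟩

lemma IsLocalWalk.isLocalPath {η : List (N.Trans a)} (hη : IsLocalWalk i j η)
    (hT : ∀ t ∈ η, t ∈ T a) (hnd : (i :: η.map Trans.dest).Nodup) :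
    IsLocalPath T i j η := by
  refine ⟨hT, ?_⟩
  rcases eq_or_ne η [] with rfl | hne
  · exact .inl ⟨hη, rfl⟩
  have hj : j ∈ η.map Trans.dest :=
    hη.getLast_dest hne ▸ List.mem_map_of_mem (List.getLast_mem hne)
  have hdest (n : ℕ) (hn : n < η.length) :
      η[n].dest = (i :: η.map Trans.dest)[n + 1]'(by simpa using hn) := by simp
  refine .inr ⟨fun hij => (List.nodup_cons.1 hnd).1 (hij ▸ hj), hne, ?_, hη.getLast_dest hne,
    fun n hn => ?_, fun n m hmn heq => ?_⟩
  · simpa [List.head_eq_getElem] using hη.getElem_orig 0 (List.length_pos_iff.2 hne)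
  · simp only [List.get_eq_getElem, hη.getElem_orig (n + 1) hn, hdest]
  · simp only [List.get_eq_getElem, hη.getElem_orig m m.2, hdest n n.2] at heq
    have := hnd.getElem_inj_iff.1 heq
    omega

lemma IsLocalPath.exists_dest_eq {η : List (N.Trans a)} (hη : IsLocalPath T i j η)
    (hij : i ≠ j) : ∃ u ∈ η, u.dest = j := by
  rcases hη.2 with ⟨hij', -⟩ | ⟨-, hne, -, hlast, -⟩
  · exact absurd hij' hij
  · exact ⟨_, List.getLast_mem hne, hlast⟩

end Walks

section Validity

variable {π ρ : List (Step N)} {τ : Step N} {Ω : Set (Obj N)} {b : N.Auto}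

def localWalk (π : List (Step N)) (b : N.Auto) : List (N.Trans b) :=
  π.filterMap (· b)

lemma mem_localWalk {u : N.Trans b} : u ∈ localWalk π b ↔ ∃ τ ∈ π, τ b = some u :=
  List.mem_filterMap

lemma localWalk_concat : localWalk (ρ ++ [τ]) b = localWalk ρ b ++ (τ b).toList := by
  cases h : τ b <;> simp [localWalk, h]

lemma IsTrace.isLocalWalk (h : IsTrace T s π) (b : N.Auto) :
    IsLocalWalk (s b) (applyTrace s π b) (localWalk π b) := by
  induction π using List.reverseRecOn with
  | nil => rfl
  | append_singleton ρ τ ih =>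
    obtain ⟨hρ, -, hpl⟩ := isTrace_concat.1 h
    rw [localWalk_concat, applyTrace_concat]
    cases hτ : τ b with
    | none => simpa [applyStep_of_eq_none hτ] using ih hρ
    | some u =>
      rw [applyStep_of_eq_some hτ]
      exact (ih hρ).concat (hpl.orig_eq hτ).symm

lemma IsTrace.mem_transMap (h : IsTrace T s π) {u : N.Trans b} (hu : u ∈ localWalk π b) :
    u ∈ T b := by
  obtain ⟨τ, hτ, hτb⟩ := mem_localWalk.1 hu
  exact h.wf_of_mem hτ hτb

def EnabValid (s : GState N) (Ω : Set (Obj N)) {b : N.Auto} (u : N.Trans b) : Prop :=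
  ∀ (c : N.Auto) (k : N.LS c), u.enab c = some k → (⟨c, (s c, k)⟩ : Obj N) ∈ Ω

lemma IsLocalWalk.exists_mem_rcsol_subset {a : N.Auto} {i j : N.LS a} {w : List (N.Trans a)}
    (hw : IsLocalWalk i j w) (hT : ∀ u ∈ w, u ∈ T a) (hv : ∀ u ∈ w, EnabValid s Ω u) :
    ∃ η ∈ rcsol T s Ω ⟨a, (i, j)⟩, η ⊆ w := by
  obtain ⟨η, hη, hnd, hsub⟩ := hw.exists_nodup
  exact ⟨η, ⟨hη.isLocalPath (fun u hu => hT u (hsub hu)) hnd, fun u hu => hv u (hsub hu)⟩,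
    hsub⟩

lemma IsTrace.applyTrace_mem_of_enabValid (hΩ : Fop T s Ω = Ω) (h : IsTrace T s π)
    (hv : ∀ b, ∀ u ∈ localWalk π b, EnabValid s Ω u) (b : N.Auto) :
    (⟨b, (s b, applyTrace s π b)⟩ : Obj N) ∈ Ω := by
  obtain ⟨η, hη, -⟩ :=
    (h.isLocalWalk b).exists_mem_rcsol_subset (fun _ => h.mem_transMap) (hv b)
  rw [← hΩ]
  exact ⟨η, hη⟩

lemma IsTrace.enabValid (hΩ : Fop T s Ω = Ω) (h : IsTrace T s π) :
    ∀ b, ∀ u ∈ localWalk π b, EnabValid s Ω u := by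
  induction π using List.reverseRecOn with
  | nil => simp [localWalk]
  | append_singleton ρ τ ih =>
    obtain ⟨hρ, -, hpl⟩ := isTrace_concat.1 h
    intro b u hu c k hk
    rw [localWalk_concat, List.mem_append, Option.mem_toList] at hu
    rcases hu with hu | hu
    · exact ih hρ b u hu c k hk
    · rw [← hpl.enab_eq hu hk]
      exact hρ.applyTrace_mem_of_enabValid hΩ (ih hρ) c

end Validity

section MinimalTrace

variable {g : N.Auto} {x : N.LS g} {π ρ ρ' : List (Step N)} {τ : Step N} {t : N.Trans g}

lemma MinimalTrace.eq_nil_of_dest_eq (h : MinimalTrace T s ⟨g, x⟩ (ρ ++ τ :: ρ'))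
    (hτ : τ g = some t) (hx : t.dest = x) : ρ' = [] := by
  have hprefix : ρ ++ [τ] <+: ρ ++ τ :: ρ' := ⟨ρ', by simp⟩
  have heq := h.eq_of_subTrace h.1.of_append_cons hprefix.length_le
    (mem_tracePost_concat (hx ▸ Step.mem_post_of_eq_some hτ)) (subTrace_of_prefix hprefix)
  simpa using heq

lemma MinimalTrace.dest_ne_of_mem_localWalk (h : MinimalTrace T s ⟨g, x⟩ (ρ ++ τ :: ρ'))
    {u : N.Trans g} (hu : u ∈ localWalk ρ g) : u.dest ≠ x := by
  intro hx
  obtain ⟨τ', hτ', hτ'g⟩ := mem_localWalk.1 hu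
  obtain ⟨ρ₁, ρ₂, rfl⟩ := List.append_of_mem hτ'
  have h' : MinimalTrace T s ⟨g, x⟩ (ρ₁ ++ τ' :: (ρ₂ ++ τ :: ρ')) := by simpa using h
  simpa using h'.eq_nil_of_dest_eq hτ'g hx

lemma MinimalTrace.applyTrace_ne (h : MinimalTrace T s ⟨g, x⟩ (ρ ++ τ :: ρ'))
    (hg : s g ≠ x) : applyTrace s ρ g ≠ x := by
  intro hx
  obtain ⟨u, hu, hux⟩ :=
    (h.1.of_append.isLocalWalk g).exists_dest_eq (by rwa [hx])
  exact h.dest_ne_of_mem_localWalk hu (hux.trans hx)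

lemma MinimalTrace.exists_eq_concat (h : MinimalTrace T s ⟨g, x⟩ π) (hg : s g ≠ x) :
    ∃ ρ τ t, π = ρ ++ [τ] ∧ τ g = some t ∧ t.dest = x := by
  obtain ⟨ρ, τ, ρ', rfl, hpost⟩ := exists_eq_append_cons_of_mem_tracePost h.2.1
  rcases Step.dest_eq_or_mem_pre_of_mem_post hpost with ⟨t, hτ, hx⟩ | hpre
  · exact ⟨ρ, τ, t, by rw [h.eq_nil_of_dest_eq hτ hx], hτ, hx⟩
  · exact absurd ((isTrace_concat.1 h.1.of_append_cons).2.2 _ hpre) (h.applyTrace_ne hg)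

lemma MinimalTrace.eq_none_of_ne (h : MinimalTrace T s ⟨g, x⟩ (ρ ++ [τ]))
    (hτ : τ g = some t) (hx : t.dest = x) {a : N.Auto} (hag : a ≠ g) : τ a = none := by
  let σ : Step N := fun c => if c = g then τ c else none
  have hσ : σ.Sub τ := fun c u hu => by by_cases hc : c = g <;> simp_all [σ]
  obtain ⟨hρ, hwf, hpl⟩ := isTrace_concat.1 h.1
  have heq := h.eq_of_subTrace
    (isTrace_concat.2 ⟨hρ, fun _ _ hu => hwf (hσ hu), hpl.of_sub hσ⟩) (by simp)
    (mem_tracePost_concat (hx ▸ Step.mem_post_of_eq_some (by simp [σ, hτ])))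
    (subTrace_concat hσ)
  have hστ : σ = τ := by simpa using heq
  rw [← hστ]
  exact if_neg hag

lemma MinimalTrace.mem_trB {Ω B : Set (Obj N)} (hΩ : Fop T s Ω = Ω)
    (hB : (⟨g, (s g, x)⟩ : Obj N) ∈ B) (hg : s g ≠ x)
    (h : MinimalTrace T s ⟨g, x⟩ (ρ ++ [τ])) (hτ : τ g = some t) (hx : t.dest = x) :
    (⟨g, t⟩ : Σ a : N.Auto, N.Trans a) ∈ trB T s Ω B := by
  have hw := h.1.isLocalWalk g
  rw [applyTrace_concat, applyStep_of_eq_some hτ, hx] at hw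
  obtain ⟨η, hη, hsub⟩ :=
    hw.exists_mem_rcsol_subset (fun _ => h.1.mem_transMap) (h.1.enabValid hΩ g)
  obtain ⟨u, hu, hux⟩ := hη.1.exists_dest_eq hg
  have hut : u = t := by
    have hu' := hsub hu
    rw [localWalk_concat, List.mem_append, Option.mem_toList, hτ] at hu'
    rcases hu' with hu' | hu'
    · exact absurd hux (h.dest_ne_of_mem_localWalk hu')
    · exact (Option.some.inj hu').symm
  exact ⟨s g, x, hB, η, hη, hut ▸ hu⟩

end MinimalTrace

end AN

/-- **Lemma 2** (the last step of a minimal trace is in `tr(B)`): if `π` is a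
minimal trace for `g_⊤` reachability from `s`, then every transition of its
last step belongs to `tr(B)`. -/
theorem last_step_of_minimal_trace_in_trB
    (N : AN) (T : TransMap N) (s : GState N)
    (g : N.Auto) (gtop : N.LS g) (hg : s g ≠ gtop)
    (Ω : Set (Obj N)) (hΩ : IsLeast {W : Set (Obj N) | Fop T s W = W} Ω)
    (B : Set (Obj N)) (hB : IsLeast {B' : Set (Obj N) | BClosed T s Ω g gtop B'} B)
    (π : List (Step N)) (hπ : MinimalTrace T s ⟨g, gtop⟩ π) :
    ∃ hne : π ≠ [], ∀ (a : N.Auto) (t : N.Trans a),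
      (π.getLast hne) a = some t →
        (⟨a, t⟩ : Σ a : N.Auto, N.Trans a) ∈ trB T s Ω B := by
  obtain ⟨ρ, τ, t, rfl, hτ, hx⟩ := hπ.exists_eq_concat hg
  refine ⟨by simp, fun a u hu => ?_⟩
  rw [List.getLast_concat] at hu
  obtain rfl | hag := eq_or_ne a g
  · obtain rfl : u = t := Option.some.inj (hu.symm.trans hτ)
    exact hπ.mem_trB hΩ.1 hB.1.1 hg hτ hx
  · simp [hπ.eq_none_of_ne hτ hx hag] at hu
end
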